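/- arXiv:math/0111171 — 9 statements merged into one kernel-verified Lean document; each statement's English description precedes it below -/
import Mathlib

section
/- Let M be a set and s : M × M → M × M a map, and define binary operations · and * on M by s(x,y) = (x·y, x*y). Then s is a set-theoretical solution of the pentagon equation (i.e. s is a bijection and s_23 ∘ s_13 ∘ s_12 = s_12 ∘ s_23) if and only if all of the following hold: (1) (x·y)·z = x·(y·z) for all x,y,z ∈ M; (2) (x*y)·((x·y)*z) = x*(y·z) for all x,y,z ∈ M; (3) (x*y)*((x·y)*z) = y*z for all x,y,z ∈ M; (4) for every pair (x,y) ∈ M × M there exists a unique pair (u,z) ∈ M × M with u·z = x and u*z = y. -/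
/-- The map acting as `s` on coordinates 1 and 2 of `M × M × M`. -/
def map12 {M : Type*} (s : M × M → M × M) : M × M × M → M × M × M :=
  fun p => ((s (p.1, p.2.1)).1, (s (p.1, p.2.1)).2, p.2.2)

/-- The map acting as `s` on coordinates 1 and 3 of `M × M × M`. -/
def map13 {M : Type*} (s : M × M → M × M) : M × M × M → M × M × M :=
  fun p => ((s (p.1, p.2.2)).1, p.2.1, (s (p.1, p.2.2)).2)

/-- The map acting as `s` on coordinates 2 and 3 of `M × M × M`. -/
def map23 {M : Type*} (s : M × M → M × M) : M × M × M → M × M × M :=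
  fun p => (p.1, s p.2)

/-- writing `s(x,y) = (x·y, x*y)`, the map `s` is a set-theoretical
solution of the pentagon equation (a bijection with `s₂₃ ∘ s₁₃ ∘ s₁₂ = s₁₂ ∘ s₂₃`)
iff `·` is associative, the two compatibility identities between `·` and `*` hold,
and every pair `(x,y)` has a unique pair `(u,z)` with `u·z = x` and `u*z = y`. -/
theorem stmt1 {M : Type*} (s : M × M → M × M) (dot star : M → M → M)
    (hs : ∀ x y : M, s (x, y) = (dot x y, star x y)) :
    (Function.Bijective s ∧
        map23 s ∘ map13 s ∘ map12 s = map12 s ∘ map23 s) ↔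
      ((∀ x y z : M, dot (dot x y) z = dot x (dot y z)) ∧
       (∀ x y z : M, dot (star x y) (star (dot x y) z) = star x (dot y z)) ∧
       (∀ x y z : M, star (star x y) (star (dot x y) z) = star y z) ∧
       (∀ x y : M, ∃! uz : M × M, dot uz.1 uz.2 = x ∧ star uz.1 uz.2 = y)) := by
  have hseq : ∀ p : M × M, s p = (dot p.1 p.2, star p.1 p.2) := by
    intro ⟨a, b⟩; exact hs a b
  constructor
  · rintro ⟨hb, heq⟩
    have key : ∀ x y z : M,
        dot (dot x y) z = dot x (dot y z) ∧
        dot (star x y) (star (dot x y) z) = star x (dot y z) ∧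
        star (star x y) (star (dot x y) z) = star y z := by
      intro x y z
      have h := congrFun heq (x, y, z)
      simp only [map12, map13, map23, Function.comp_apply, hseq, Prod.mk.injEq] at h
      exact ⟨h.1, h.2⟩
    refine ⟨fun x y z => (key x y z).1, fun x y z => (key x y z).2.1,
      fun x y z => (key x y z).2.2, ?_⟩
    intro x y
    obtain ⟨p, hp, hu⟩ := (Function.bijective_iff_existsUnique s).mp hb (x, y)
    rw [hseq p, Prod.mk.injEq] at hp
    refine ⟨p, hp, fun q hq => hu q ?_⟩
    show s q = (x, y)
    rw [hseq q, Prod.mk.injEq]; exact hq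
  · rintro ⟨h1, h2, h3, h4⟩
    constructor
    · rw [Function.bijective_iff_existsUnique]
      rintro ⟨x, y⟩
      obtain ⟨p, hp, hu⟩ := h4 x y
      refine ⟨p, ?_, fun q hq => hu q ?_⟩
      · show s p = (x, y)
        rw [hseq p]; exact Prod.ext hp.1 hp.2
      · replace hq : s q = (x, y) := hq
        rw [hseq q, Prod.mk.injEq] at hq; exact hq
    · funext ⟨x, y, z⟩
      simp only [map12, map13, map23, Function.comp_apply, hseq, Prod.mk.injEq]
      exact ⟨h1 x y z, h2 x y z, h3 x y z⟩
end

section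
/- Let M be a set, s : M × M → M × M a set-theoretical solution of the pentagon equation with components s(x,y) = (x·y, x*y), and let P : M × M → M × M be the swap P(x,y) = (y,x). Then s̄ := P ∘ s⁻¹ ∘ P is also a set-theoretical solution of the pentagon equation; moreover, writing s̄(x,y) = (x⊙y, x⊛y), one has (x*y)⊙(x·y) = y and (x*y)⊛(x·y) = x for all x,y ∈ M, and also (x⊛y)·(x⊙y) = y and (x⊛y)*(x⊙y) = x for all x,y ∈ M. -/
/-- Total reversal of coordinates on `M × M × M`. -/
def rev3 {M : Type*} : M × M × M → M × M × M := fun p => (p.2.2, p.2.1, p.1)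

/-- if `s` is a set-theoretical solution of the pentagon equation
(here a bijection, encoded as an `Equiv`, satisfying the reversed pentagon
equation), `P` is the swap, and `s̄ = P ∘ s⁻¹ ∘ P`, then `s̄` is again a
set-theoretical solution of the pentagon equation; moreover, writing
`s(x,y) = (x·y, x*y)` and `s̄(x,y) = (x⊙y, x⊛y)`, one has
`(x*y)⊙(x·y) = y`, `(x*y)⊛(x·y) = x`, `(x⊛y)·(x⊙y) = y` and
`(x⊛y)*(x⊙y) = x` for all `x, y`. -/
theorem stmt2 {M : Type*} (s : (M × M) ≃ (M × M))
    (h : map23 ⇑s ∘ map13 ⇑s ∘ map12 ⇑s = map12 ⇑s ∘ map23 ⇑s)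
    (P : M × M → M × M) (hP : ∀ x y : M, P (x, y) = (y, x))
    (sbar : M × M → M × M) (hsbar : sbar = P ∘ ⇑s.symm ∘ P) :
    (Function.Bijective sbar ∧
        map23 sbar ∘ map13 sbar ∘ map12 sbar = map12 sbar ∘ map23 sbar) ∧
    (∀ x y : M,
        (sbar ((s (x, y)).2, (s (x, y)).1)).1 = y ∧
        (sbar ((s (x, y)).2, (s (x, y)).1)).2 = x) ∧
    (∀ x y : M,
        (s ((sbar (x, y)).2, (sbar (x, y)).1)).1 = y ∧
        (s ((sbar (x, y)).2, (sbar (x, y)).1)).2 = x) := by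
  subst hsbar
  have hPinv : Function.Involutive P := by
    rintro ⟨x, y⟩; rw [hP, hP]
  have hsb : ∀ x y : M, (P ∘ ⇑s.symm ∘ P) (x, y) = ((s.symm (y, x)).2, (s.symm (y, x)).1) := by
    intro x y
    simp only [Function.comp_apply, hP]
  -- inverse lemmas for the coordinate maps
  have inv12 : ∀ p : M × M × M, map12 ⇑s (map12 ⇑s.symm p) = p := by
    rintro ⟨a, b, c⟩; simp [map12]
  have inv12' : ∀ p : M × M × M, map12 ⇑s.symm (map12 ⇑s p) = p := by
    rintro ⟨a, b, c⟩; simp [map12]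
  have inv13 : ∀ p : M × M × M, map13 ⇑s (map13 ⇑s.symm p) = p := by
    rintro ⟨a, b, c⟩; simp [map13]
  have inv23 : ∀ p : M × M × M, map23 ⇑s (map23 ⇑s.symm p) = p := by
    rintro ⟨a, b, c⟩; simp [map23]
  have inv23' : ∀ p : M × M × M, map23 ⇑s.symm (map23 ⇑s p) = p := by
    rintro ⟨a, b, c⟩; simp [map23]
  -- pentagon for s.symm (reversed)
  have h' : ∀ p : M × M × M,
      map12 ⇑s.symm (map13 ⇑s.symm (map23 ⇑s.symm p)) =
        map23 ⇑s.symm (map12 ⇑s.symm p) := by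
    intro p
    have hp := congrFun h (map12 ⇑s.symm (map13 ⇑s.symm (map23 ⇑s.symm p)))
    simp only [Function.comp_apply, inv12, inv13, inv23] at hp
    conv_rhs => rw [hp]
    rw [inv12', inv23']
  -- conjugation identities
  have L12 : ∀ p : M × M × M, map12 (P ∘ ⇑s.symm ∘ P) p = rev3 (map23 ⇑s.symm (rev3 p)) := by
    rintro ⟨a, b, c⟩
    simp only [map12, map23, rev3, hsb]
  have L13 : ∀ p : M × M × M, map13 (P ∘ ⇑s.symm ∘ P) p = rev3 (map13 ⇑s.symm (rev3 p)) := by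
    rintro ⟨a, b, c⟩
    simp only [map13, rev3, hsb]
  have L23 : ∀ p : M × M × M, map23 (P ∘ ⇑s.symm ∘ P) p = rev3 (map12 ⇑s.symm (rev3 p)) := by
    rintro ⟨a, b, c⟩
    simp only [map12, map23, rev3, hsb]
  have RR : ∀ p : M × M × M, rev3 (rev3 p) = p := by rintro ⟨a, b, c⟩; rfl
  refine ⟨⟨?_, ?_⟩, ?_, ?_⟩
  · exact hPinv.bijective.comp (s.symm.bijective.comp hPinv.bijective)
  · funext p
    simp only [Function.comp_apply, L12, L13, L23, RR]
    rw [h']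
  · intro x y
    have h1 : ((s (x, y)).1, (s (x, y)).2) = s (x, y) := rfl
    simp only [Function.comp_apply, hP, h1, Equiv.symm_apply_apply, hP]
    exact ⟨trivial, trivial⟩
  · intro x y
    rw [hsb]
    have h1 : ((s.symm (y, x)).1, (s.symm (y, x)).2) = s.symm (y, x) := rfl
    simp only [h1, Equiv.apply_symm_apply]
    exact ⟨trivial, trivial⟩
end

section
/- Let G be a group and let * : G × G → G be a binary operation such that the map s : G × G → G × G defined by s(x,y) = (xy, x*y) (where xy is the group multiplication) is a set-theoretical solution of the pentagon equation. Then x*y = y for all x,y ∈ G. -/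
/-!
Writing `xy` for the product and `x*y` for `star x y`, the second and third coordinates of the
pentagon equation for `s(x,y) = (xy, x*y)` say `(x*y)(xy*z) = x*(yz)` and
`(x*y)*(xy*z) = y*z`. The first identity gives `x*1 = 1` and `(1*y)(y*z) = 1*(yz)`, hence
`c*c⁻¹ = (1*c)⁻¹(1*1)`; so `s(c, c⁻¹) = (1, (1*c)⁻¹(1*1))` and the injectivity of `s` makes
`c ↦ 1*c` injective. The second identity with `y = 1` gives `1*(x*z) = 1*z`, whence `x*z = z`.
-/

theorem pentagon_star_identities {M : Type*} [Mul M] {star : M → M → M} {s : M × M → M × M}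
    (hs : ∀ x y : M, s (x, y) = (x * y, star x y))
    (hpent : map23 s ∘ map13 s ∘ map12 s = map12 s ∘ map23 s) (x y z : M) :
    star x y * star (x * y) z = star x (y * z) ∧
      star (star x y) (star (x * y) z) = star y z := by
  have h := congrFun hpent (x, y, z)
  simp only [Function.comp_apply, map12, map13, map23, hs, Prod.mk.injEq] at h
  exact ⟨h.2.1, h.2.2⟩

section

variable {G : Type*} [Group G] {star : G → G → G}
  (h₁ : ∀ x y z : G, star x y * star (x * y) z = star x (y * z))

include h₁

theorem star_one_right (x : G) : star x 1 = 1 :=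
  mul_eq_right.1 (by simpa only [mul_one] using h₁ x 1 1)

theorem star_one_mul_star (y z : G) : star 1 y * star y z = star 1 (y * z) := by
  simpa only [one_mul] using h₁ 1 y z

theorem star_inv_right (c : G) : star c c⁻¹ = (star 1 c)⁻¹ * star 1 1 := by
  have h := star_one_mul_star h₁ c c⁻¹
  rw [mul_inv_cancel] at h
  rw [← h, inv_mul_cancel_left]

theorem star_one_star
    (h₂ : ∀ x y z : G, star (star x y) (star (x * y) z) = star y z) (x z : G) :
    star 1 (star x z) = star 1 z := by
  simpa only [star_one_right h₁, mul_one] using h₂ x 1 z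

theorem star_one_injective {s : G × G → G × G} (hs : ∀ x y : G, s (x, y) = (x * y, star x y))
    (hinj : Function.Injective s) : Function.Injective (star 1) := by
  intro a b hab
  have : s (a, a⁻¹) = s (b, b⁻¹) := by
    rw [hs, hs, mul_inv_cancel, mul_inv_cancel, star_inv_right h₁, star_inv_right h₁, hab]
  exact (Prod.ext_iff.1 (hinj this)).1

end

/-- if `G` is a group and `s(x,y) = (xy, x*y)` (with `xy` the group
multiplication) is a set-theoretical solution of the pentagon equation, then
`x*y = y` for all `x, y ∈ G`. -/
theorem stmt3 {G : Type*} [Group G] (star : G → G → G)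
    (s : G × G → G × G) (hs : ∀ x y : G, s (x, y) = (x * y, star x y))
    (hbij : Function.Bijective s)
    (hpent : map23 s ∘ map13 s ∘ map12 s = map12 s ∘ map23 s) :
    ∀ x y : G, star x y = y := by
  have h₁ := fun x y z => (pentagon_star_identities hs hpent x y z).1
  have h₂ := fun x y z => (pentagon_star_identities hs hpent x y z).2
  intro x y
  exact star_one_injective h₁ hs hbij.1 (star_one_star h₁ h₂ x y)
end

section
/- Let G be a group and ρ : G → G a bijection such that the expression σ(x) := ρ(y)⁻¹ · ρ(ρ(x) · ρ(xy)⁻¹) is independent of y, i.e. there is a map σ : G → G with ρ(y)⁻¹ · ρ(ρ(x) · ρ(xy)⁻¹) = σ(x) for all x,y ∈ G. Then the map s : G × G → G × G defined by s(x,y) = (xy, ρ(x)·ρ(xy)⁻¹) is a set-theoretical solution of the pentagon equation, and its inverse is given by s⁻¹(x,y) = (ρ⁻¹(y·ρ(x)), ρ⁻¹(y·ρ(x))⁻¹·x). -/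
/-!
Write `s(x, y) = (xy, θ(x, y))` with `θ(x, y) = ρ(x) ρ(xy)⁻¹`. Evaluating both sides of the
pentagon equation at `(x, y, z)`, the first coordinates agree by associativity, the second ones
by the telescoping identity `θ(x, y) θ(xy, z) = θ(x, yz)`, and the third ones reduce to
`θ(θ(x, y), θ(xy, z)) = θ(y, z)`. By the hypothesis on `σ`, `ρ(θ(x, y)) = ρ(y) σ(x)` for all `y`,
so, using the telescoping identity once more,
`θ(θ(x, y), θ(xy, z)) = ρ(θ(x, y)) ρ(θ(x, yz))⁻¹ = ρ(y) σ(x) (ρ(yz) σ(x))⁻¹` and `σ(x)` cancels.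
-/

section Semigroup

variable {M : Type*} [Semigroup M]

def mulTwist (θ : M → M → M) : M × M → M × M :=
  fun p => (p.1 * p.2, θ p.1 p.2)

theorem mulTwist_pentagon (θ : M → M → M)
    (h_mul : ∀ x y z, θ x y * θ (x * y) z = θ x (y * z))
    (h_comp : ∀ x y z, θ (θ x y) (θ (x * y) z) = θ y z) :
    map23 (mulTwist θ) ∘ map13 (mulTwist θ) ∘ map12 (mulTwist θ) =
      map12 (mulTwist θ) ∘ map23 (mulTwist θ) := by
  funext ⟨x, y, z⟩
  simp [map12, map13, map23, mulTwist, mul_assoc, h_mul, h_comp]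

end Semigroup

section Group

variable {G : Type*} [Group G]

theorem mulTwist_leftInverse (ρ : G ≃ G) :
    Function.LeftInverse
      (fun p : G × G => (ρ.symm (p.2 * ρ p.1), (ρ.symm (p.2 * ρ p.1))⁻¹ * p.1))
      (mulTwist fun x y => ρ x * (ρ (x * y))⁻¹) := by
  rintro ⟨x, y⟩
  simp [mulTwist]

theorem mulTwist_rightInverse (ρ : G ≃ G) :
    Function.RightInverse
      (fun p : G × G => (ρ.symm (p.2 * ρ p.1), (ρ.symm (p.2 * ρ p.1))⁻¹ * p.1))
      (mulTwist fun x y => ρ x * (ρ (x * y))⁻¹) := by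
  rintro ⟨x, y⟩
  simp [mulTwist]

end Group

/-- let `G` be a group and `ρ : G → G` a bijection such that
`σ(x) := ρ(y)⁻¹ · ρ(ρ(x)·ρ(xy)⁻¹)` is independent of `y`. Then
`s(x,y) = (xy, ρ(x)·ρ(xy)⁻¹)` is a set-theoretical solution of the pentagon
equation, whose inverse is `(x,y) ↦ (ρ⁻¹(y·ρ(x)), ρ⁻¹(y·ρ(x))⁻¹·x)`. -/
theorem stmt4 {G : Type*} [Group G] (ρ : G ≃ G) (σ : G → G)
    (hσ : ∀ x y : G, (ρ y)⁻¹ * ρ (ρ x * (ρ (x * y))⁻¹) = σ x)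
    (s : G × G → G × G)
    (hs : ∀ x y : G, s (x, y) = (x * y, ρ x * (ρ (x * y))⁻¹)) :
    (Function.Bijective s ∧
        map23 s ∘ map13 s ∘ map12 s = map12 s ∘ map23 s) ∧
    Function.LeftInverse
      (fun p : G × G => (ρ.symm (p.2 * ρ p.1), (ρ.symm (p.2 * ρ p.1))⁻¹ * p.1)) s ∧
    Function.RightInverse
      (fun p : G × G => (ρ.symm (p.2 * ρ p.1), (ρ.symm (p.2 * ρ p.1))⁻¹ * p.1)) s := by
  obtain rfl : s = mulTwist fun x y => ρ x * (ρ (x * y))⁻¹ := funext fun p => hs p.1 p.2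
  have hρ : ∀ x y, ρ (ρ x * (ρ (x * y))⁻¹) = ρ y * σ x := fun x y => by
    rw [← hσ x y, mul_inv_cancel_left]
  have telescope : ∀ x y z, ρ x * (ρ (x * y))⁻¹ * (ρ (x * y) * (ρ (x * y * z))⁻¹) =
      ρ x * (ρ (x * (y * z)))⁻¹ := fun x y z => by
    group
  have pentagon := mulTwist_pentagon (fun x y => ρ x * (ρ (x * y))⁻¹) telescope
    (fun x y z => by simp only [telescope, hρ]; group)
  exact ⟨⟨⟨(mulTwist_leftInverse ρ).injective, (mulTwist_rightInverse ρ).surjective⟩, pentagon⟩,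
    mulTwist_leftInverse ρ, mulTwist_rightInverse ρ⟩
end

section
/- For pairs of complex numbers x = (x₁,x₂), y = (y₁,y₂) define x·y = (x₁y₁, x₁y₂+x₂), and when x₁y₂+x₂ ≠ 0 define x*y = (y₁x₂(x₁y₂+x₂)⁻¹, y₂(x₁y₂+x₂)⁻¹). Let x,y,z ∈ ℂ² and suppose d₁ := x₁y₂+x₂ ≠ 0, d₂ := x₁y₁z₂+x₁y₂+x₂ ≠ 0 and d₃ := y₁z₂+y₂ ≠ 0. Then (x*y)·((x·y)*z) = x*(y·z) and (x*y)*((x·y)*z) = y*z, all occurring star operations having nonzero denominators. -/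
/-- The operation `x·y = (x₁y₁, x₁y₂+x₂)` on pairs of complex numbers. -/
noncomputable def cdot (x y : ℂ × ℂ) : ℂ × ℂ :=
  (x.1 * y.1, x.1 * y.2 + x.2)

/-- The star operation `x*y = (y₁x₂(x₁y₂+x₂)⁻¹, y₂(x₁y₂+x₂)⁻¹)` on pairs of
complex numbers (defined when `x₁y₂+x₂ ≠ 0`). -/
noncomputable def cstar (x y : ℂ × ℂ) : ℂ × ℂ :=
  (y.1 * x.2 * (x.1 * y.2 + x.2)⁻¹, y.2 * (x.1 * y.2 + x.2)⁻¹)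

/-!
The denominator of `x*y` is `(x·y)₂`, and `·` is associative (it is matrix multiplication).
Hence the denominator of `(x·y)*z` is `((x·y)·z)₂ = (x·(y·z))₂ = d₂`, and once the first
identity is proved the denominator of `(x*y)*((x·y)*z)` is `(x*(y·z))₂ = d₃/d₂`. The two
identities themselves are direct computations with these denominators.
-/

theorem cdot_assoc (x y z : ℂ × ℂ) : cdot (cdot x y) z = cdot x (cdot y z) := by
  ext <;> simp only [cdot] <;> ring

theorem cstar_eq (x y : ℂ × ℂ) :
    cstar x y = (y.1 * x.2 * (cdot x y).2⁻¹, y.2 * (cdot x y).2⁻¹) :=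
  rfl

theorem cdot_cdot_snd (x y z : ℂ × ℂ) :
    (cdot (cdot x y) z).2 = x.1 * y.1 * z.2 + x.1 * y.2 + x.2 := by
  simp only [cdot]; ring

theorem cstar_cdot (x y z : ℂ × ℂ) :
    cstar (cdot x y) z =
      (z.1 * (x.1 * y.2 + x.2) * (x.1 * y.1 * z.2 + x.1 * y.2 + x.2)⁻¹,
        z.2 * (x.1 * y.1 * z.2 + x.1 * y.2 + x.2)⁻¹) := by
  rw [cstar_eq, cdot_cdot_snd]; rfl

theorem cstar_cdot_right (x y z : ℂ × ℂ) :
    cstar x (cdot y z) =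
      (y.1 * z.1 * x.2 * (x.1 * y.1 * z.2 + x.1 * y.2 + x.2)⁻¹,
        (y.1 * z.2 + y.2) * (x.1 * y.1 * z.2 + x.1 * y.2 + x.2)⁻¹) := by
  rw [cstar_eq, ← cdot_assoc, cdot_cdot_snd]; rfl

theorem cdot_cstar_cstar_cdot (x y z : ℂ × ℂ) (hd1 : x.1 * y.2 + x.2 ≠ 0)
    (hd2 : x.1 * y.1 * z.2 + x.1 * y.2 + x.2 ≠ 0) :
    cdot (cstar x y) (cstar (cdot x y) z) = cstar x (cdot y z) := by
  rw [cstar_cdot, cstar_cdot_right, cstar]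
  generalize hD : x.1 * y.1 * z.2 + x.1 * y.2 + x.2 = D at hd2 ⊢
  ext
  · simp only [cdot]; field_simp
  · simp only [cdot]; field_simp
    linear_combination (-y.2) * hD

theorem cstar_cstar_cstar_cdot (x y z : ℂ × ℂ) (hd1 : x.1 * y.2 + x.2 ≠ 0)
    (hd2 : x.1 * y.1 * z.2 + x.1 * y.2 + x.2 ≠ 0) (hd3 : y.1 * z.2 + y.2 ≠ 0) :
    cstar (cstar x y) (cstar (cdot x y) z) = cstar y z := by
  rw [cstar_eq (cstar x y), cdot_cstar_cstar_cdot x y z hd1 hd2, cstar_cdot_right,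
    cstar_cdot]
  generalize x.1 * y.1 * z.2 + x.1 * y.2 + x.2 = D at hd2 ⊢
  ext <;> simp only [cstar] <;> field_simp

/-- for `x, y, z ∈ ℂ²` with `d₁ := x₁y₂+x₂ ≠ 0`,
`d₂ := x₁y₁z₂+x₁y₂+x₂ ≠ 0` and `d₃ := y₁z₂+y₂ ≠ 0` one has
`(x*y)·((x·y)*z) = x*(y·z)` and `(x*y)*((x·y)*z) = y*z`, and all occurring
star operations have nonzero denominators. -/
theorem stmt6 (x y z : ℂ × ℂ)
    (hd1 : x.1 * y.2 + x.2 ≠ 0)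
    (hd2 : x.1 * y.1 * z.2 + x.1 * y.2 + x.2 ≠ 0)
    (hd3 : y.1 * z.2 + y.2 ≠ 0) :
    cdot (cstar x y) (cstar (cdot x y) z) = cstar x (cdot y z) ∧
    cstar (cstar x y) (cstar (cdot x y) z) = cstar y z ∧
    (cdot x y).1 * z.2 + (cdot x y).2 ≠ 0 ∧
    x.1 * (cdot y z).2 + x.2 ≠ 0 ∧
    (cstar x y).1 * (cstar (cdot x y) z).2 + (cstar x y).2 ≠ 0 := by
  have hassoc := cdot_cstar_cstar_cdot x y z hd1 hd2
  refine ⟨hassoc, cstar_cstar_cstar_cdot x y z hd1 hd2 hd3, ?_, ?_, ?_⟩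
  · rwa [← cdot_cdot_snd] at hd2
  · rwa [← cdot_cdot_snd, cdot_assoc] at hd2
  · change (cdot (cstar x y) (cstar (cdot x y) z)).2 ≠ 0
    rw [hassoc, cstar_cdot_right]
    exact mul_ne_zero hd3 (inv_ne_zero hd2)
end

section
/- Let G be a group with subgroups G₊ and G₋ such that G₊ ∩ G₋ = {1}, and let θ ∈ G satisfy θG₋θ⁻¹ = G₊. Suppose θ² admits a factorization θ² = p·q⁻¹ with p ∈ G₊ and q ∈ G₋ (such a factorization is unique since G₊ ∩ G₋ = {1}). Then θ̃ := p⁻¹θ also satisfies θ̃G₋θ̃⁻¹ = G₊, and θ̃² = 1. -/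
/-- let `G` be a group with subgroups `G₊, G₋` such that
`G₊ ∩ G₋ = {1}`, and `θ ∈ G` with `θG₋θ⁻¹ = G₊`. If `θ² = p·q⁻¹` with
`p ∈ G₊`, `q ∈ G₋`, then `θ̃ := p⁻¹θ` also satisfies `θ̃G₋θ̃⁻¹ = G₊`, and
`θ̃² = 1`. -/
theorem stmt12 {G : Type*} [Group G] (Gp Gm : Subgroup G)
    (hmeet : Gp ⊓ Gm = ⊥) (θ : G)
    (hθ : Subgroup.map (MulAut.conj θ).toMonoidHom Gm = Gp)
    (p q : G) (hp : p ∈ Gp) (hq : q ∈ Gm)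
    (hfac : θ * θ = p * q⁻¹) :
    Subgroup.map (MulAut.conj (p⁻¹ * θ)).toMonoidHom Gm = Gp ∧
    (p⁻¹ * θ) * (p⁻¹ * θ) = 1 := by
  -- membership characterization of hθ
  have key : ∀ x : G, x ∈ Gp ↔ θ⁻¹ * x * θ ∈ Gm := by
    intro x
    rw [← hθ]
    simp only [Subgroup.mem_map, MulEquiv.coe_toMonoidHom, MulAut.conj_apply]
    constructor
    · rintro ⟨m, hm, rfl⟩
      simpa [mul_assoc] using hm
    · intro h
      exact ⟨θ⁻¹ * x * θ, h, by group⟩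
  have hconj : Subgroup.map (MulAut.conj (p⁻¹ * θ)).toMonoidHom Gm = Gp := by
    ext x
    simp only [Subgroup.mem_map, MulEquiv.coe_toMonoidHom, MulAut.conj_apply]
    constructor
    · rintro ⟨m, hm, rfl⟩
      have h1 : θ * m * θ⁻¹ ∈ Gp := by
        rw [key]
        simpa [mul_assoc] using hm
      have : p⁻¹ * θ * m * (p⁻¹ * θ)⁻¹ = p⁻¹ * (θ * m * θ⁻¹) * p := by group
      rw [this]
      exact Gp.mul_mem (Gp.mul_mem (Gp.inv_mem hp) h1) hp
    · intro hx
      refine ⟨(p⁻¹ * θ)⁻¹ * x * (p⁻¹ * θ), ?_, by group⟩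
      have h1 : p * x * p⁻¹ ∈ Gp := Gp.mul_mem (Gp.mul_mem hp hx) (Gp.inv_mem hp)
      have h2 : θ⁻¹ * (p * x * p⁻¹) * θ ∈ Gm := (key _).mp h1
      have : (p⁻¹ * θ)⁻¹ * x * (p⁻¹ * θ) = θ⁻¹ * (p * x * p⁻¹) * θ := by group
      rw [this]
      exact h2
  refine ⟨hconj, ?_⟩
  set t := p⁻¹ * θ with ht
  -- t² ∈ Gm
  have hpinv : θ⁻¹ * p⁻¹ * θ ∈ Gm := by
    have := (key p⁻¹).mp (Gp.inv_mem hp)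
    simpa [mul_assoc] using this
  have htm : t * t ∈ Gm := by
    have heq : t * t = q⁻¹ * (θ⁻¹ * p⁻¹ * θ) := by
      rw [ht]
      calc p⁻¹ * θ * (p⁻¹ * θ) = p⁻¹ * (θ * θ) * (θ⁻¹ * p⁻¹ * θ) := by group
        _ = p⁻¹ * (p * q⁻¹) * (θ⁻¹ * p⁻¹ * θ) := by rw [hfac]
        _ = q⁻¹ * (θ⁻¹ * p⁻¹ * θ) := by group
    rw [heq]
    exact Gm.mul_mem (Gm.inv_mem hq) hpinv
  -- t² ∈ Gp : conjugate t² by t is t², and conj by t sends Gm to Gp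
  have htp : t * t ∈ Gp := by
    rw [← hconj]
    exact ⟨t * t, htm, by simp only [MulEquiv.coe_toMonoidHom, MulAut.conj_apply]; group⟩
  have : t * t ∈ Gp ⊓ Gm := ⟨htp, htm⟩
  rw [hmeet] at this
  simpa using this
end

section
/- Let G be a group with subgroups G₊ and G₋ such that G₊ ∩ G₋ = {1}, and let θ ∈ G satisfy θG₋θ⁻¹ = G₊. Let x, y ∈ G₊ and suppose θx = a·b⁻¹, θy = g·h⁻¹ and θ(xy) = c·d⁻¹ with a, c, g ∈ G₊ and b, d, h ∈ G₋. Then: (i) θ·(a⁻¹c) = (θb⁻¹θ⁻¹·g)·(d⁻¹h)⁻¹, where θb⁻¹θ⁻¹·g ∈ G₊ and d⁻¹h ∈ G₋; consequently, setting ρ(x) := a⁻¹, ρ(xy) := c⁻¹, ρ(y) := g⁻¹ and ρ(ρ(x)·ρ(xy)⁻¹) := (θb⁻¹θ⁻¹·g)⁻¹, one has ρ(y)⁻¹·ρ(ρ(x)·ρ(xy)⁻¹) = θbθ⁻¹, which is independent of y; (ii) θ⁻¹a = x·(b⁻¹)⁻¹ with x ∈ G₊ and b⁻¹ ∈ G₋,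 so that (θ⁻¹·ρ(x)⁻¹)₊ = x, showing that ρ(x) = ((θx)₊)⁻¹ is inverted by u ↦ (θ⁻¹u⁻¹)₊. -/
/-- let `G` be a group with subgroups `G₊, G₋` such that
`G₊ ∩ G₋ = {1}`, and `θ ∈ G` with `θG₋θ⁻¹ = G₊`. Let `x, y ∈ G₊` with
factorizations `θx = a·b⁻¹`, `θy = g·h⁻¹`, `θ(xy) = c·d⁻¹`
(`a, c, g ∈ G₊`, `b, d, h ∈ G₋`). Then:
(i) `θ·(a⁻¹c) = (θb⁻¹θ⁻¹·g)·(d⁻¹h)⁻¹` with `θb⁻¹θ⁻¹·g ∈ G₊` and `d⁻¹h ∈ G₋`;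
consequently, with `ρ(x) = a⁻¹`, `ρ(xy) = c⁻¹`, `ρ(y) = g⁻¹` and
`ρ(ρ(x)·ρ(xy)⁻¹) = (θb⁻¹θ⁻¹·g)⁻¹`, one has
`ρ(y)⁻¹·ρ(ρ(x)·ρ(xy)⁻¹) = g·(θb⁻¹θ⁻¹·g)⁻¹ = θbθ⁻¹`, independent of `y`;
(ii) `θ⁻¹a = x·(b⁻¹)⁻¹` with `x ∈ G₊` and `b⁻¹ ∈ G₋`, so
`(θ⁻¹·ρ(x)⁻¹)₊ = x`, showing that `ρ(x) = ((θx)₊)⁻¹` is inverted by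
`u ↦ (θ⁻¹u⁻¹)₊`. -/
theorem stmt14 {G : Type*} [Group G] (Gp Gm : Subgroup G)
    (hmeet : Gp ⊓ Gm = ⊥) (θ : G)
    (hθ : Subgroup.map (MulAut.conj θ).toMonoidHom Gm = Gp)
    (x y a b c d g h : G) (hx : x ∈ Gp) (hy : y ∈ Gp)
    (ha : a ∈ Gp) (hb : b ∈ Gm) (hfx : θ * x = a * b⁻¹)
    (hg : g ∈ Gp) (hh : h ∈ Gm) (hfy : θ * y = g * h⁻¹)
    (hc : c ∈ Gp) (hd : d ∈ Gm) (hfxy : θ * (x * y) = c * d⁻¹) :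
    (θ * (a⁻¹ * c) = (θ * b⁻¹ * θ⁻¹ * g) * (d⁻¹ * h)⁻¹ ∧
      θ * b⁻¹ * θ⁻¹ * g ∈ Gp ∧ d⁻¹ * h ∈ Gm ∧
      g * (θ * b⁻¹ * θ⁻¹ * g)⁻¹ = θ * b * θ⁻¹) ∧
    (θ⁻¹ * a = x * (b⁻¹)⁻¹ ∧ x ∈ Gp ∧ b⁻¹ ∈ Gm) := by
  have hconj : θ * b⁻¹ * θ⁻¹ ∈ Gp := by
    rw [← hθ]
    exact ⟨b⁻¹, Gm.inv_mem hb, by simp [mul_assoc]⟩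
  have key : θ * (a⁻¹ * c) = (θ * b⁻¹ * θ⁻¹ * g) * (d⁻¹ * h)⁻¹ := by
    have h1 : c = a * b⁻¹ * y * d := by
      have := hfxy
      rw [← mul_assoc, hfx] at this
      group at this ⊢
      rw [this]; group
    have h2 : θ * y = g * h⁻¹ := hfy
    rw [h1]
    calc θ * (a⁻¹ * (a * b⁻¹ * y * d))
        = θ * b⁻¹ * θ⁻¹ * (θ * y) * d := by group
      _ = θ * b⁻¹ * θ⁻¹ * (g * h⁻¹) * d := by rw [h2]
      _ = (θ * b⁻¹ * θ⁻¹ * g) * (d⁻¹ * h)⁻¹ := by group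
  refine ⟨⟨key, Gp.mul_mem hconj hg, Gm.mul_mem (Gm.inv_mem hd) hh, by group⟩,
    ?_, hx, Gm.inv_mem hb⟩
  have ha2 : a = θ * x * b := by rw [hfx]; group
  rw [ha2]; group
end

section
/- Let G be a group with subgroups G₊ and G₋ such that G₊ ∩ G₋ = {1}, and let θ ∈ G satisfy θG₋θ⁻¹ = G₊ and θ² = 1. Let x, y ∈ G₊ and suppose θx = a·b⁻¹ and θy = g·h⁻¹ with a, g ∈ G₊ and b, h ∈ G₋. Then: (i) θa = x·(b⁻¹)⁻¹ with x ∈ G₊ and b⁻¹ ∈ G₋, so the map j(u) := (θu)₊ satisfies j(j(x)) = x; (ii) θx⁻¹ = (θbθ)·(θaθ)⁻¹ with θbθ ∈ G₊ and θaθ ∈ G₋, so that k(x) := θb⁻¹θ satisfies k(x) = ((θx⁻¹)₊)⁻¹; (iii) if moreover θ·(θb⁻¹θ·g) = e·f⁻¹ with e ∈ G₊ and f ∈ G₋, then θ(xy) = (a·e)·(h·f)⁻¹ with a·e ∈ G₊ and h·f ∈ G₋, and hence j(xy) = j(x)·j(k(x)·j(y)). -/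
/-- let `G` be a group with subgroups `G₊, G₋` such that
`G₊ ∩ G₋ = {1}`, and `θ ∈ G` with `θG₋θ⁻¹ = G₊` and `θ² = 1`. Let
`x, y ∈ G₊` with factorizations `θx = a·b⁻¹` and `θy = g·h⁻¹`
(`a, g ∈ G₊`, `b, h ∈ G₋`). Then:
(i) `θa = x·(b⁻¹)⁻¹` with `x ∈ G₊` and `b⁻¹ ∈ G₋`, so `j(u) := (θu)₊`
satisfies `j(j(x)) = x`;
(ii) `θx⁻¹ = (θbθ)·(θaθ)⁻¹` with `θbθ ∈ G₊` and `θaθ ∈ G₋`, so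
`k(x) := θb⁻¹θ` satisfies `k(x) = ((θx⁻¹)₊)⁻¹`, i.e. `θb⁻¹θ = (θbθ)⁻¹`;
(iii) if moreover `θ·(θb⁻¹θ·g) = e·f⁻¹` with `e ∈ G₊`, `f ∈ G₋`, then
`θ(xy) = (a·e)·(h·f)⁻¹` with `a·e ∈ G₊` and `h·f ∈ G₋`, and hence
`j(xy) = j(x)·j(k(x)·j(y))`. -/
theorem stmt15 {G : Type*} [Group G] (Gp Gm : Subgroup G)
    (hmeet : Gp ⊓ Gm = ⊥) (θ : G)
    (hθ : Subgroup.map (MulAut.conj θ).toMonoidHom Gm = Gp)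
    (hθ2 : θ * θ = 1)
    (x y a b g h : G) (hx : x ∈ Gp) (hy : y ∈ Gp)
    (ha : a ∈ Gp) (hb : b ∈ Gm) (hfx : θ * x = a * b⁻¹)
    (hg : g ∈ Gp) (hh : h ∈ Gm) (hfy : θ * y = g * h⁻¹) :
    (θ * a = x * (b⁻¹)⁻¹ ∧ x ∈ Gp ∧ b⁻¹ ∈ Gm) ∧
    (θ * x⁻¹ = (θ * b * θ) * (θ * a * θ)⁻¹ ∧
      θ * b * θ ∈ Gp ∧ θ * a * θ ∈ Gm ∧
      θ * b⁻¹ * θ = (θ * b * θ)⁻¹) ∧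
    (∀ e f : G, e ∈ Gp → f ∈ Gm → θ * (θ * b⁻¹ * θ * g) = e * f⁻¹ →
      θ * (x * y) = (a * e) * (h * f)⁻¹ ∧ a * e ∈ Gp ∧ h * f ∈ Gm) := by
  have hinv : θ⁻¹ = θ := inv_eq_of_mul_eq_one_right hθ2
  have hconjm : ∀ m ∈ Gm, θ * m * θ ∈ Gp := by
    intro m hm
    rw [← hθ]
    refine ⟨m, hm, ?_⟩
    simp [MulAut.conj, hinv]
  have hconjp : ∀ p ∈ Gp, θ * p * θ ∈ Gm := by
    intro p hp
    rw [← hθ] at hp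
    obtain ⟨m, hm, rfl⟩ := hp
    have hmm : θ * (θ * m * θ) * θ = m := by
      rw [← mul_assoc, ← mul_assoc, hθ2, one_mul, mul_assoc, hθ2, mul_one]
    simpa [MulAut.conj, hinv, hmm] using hm
  have hax : a = θ * x * b := by rw [hfx]; group
  have hyy : y = θ * g * h⁻¹ := by rw [mul_assoc, ← hfy, ← mul_assoc, hθ2, one_mul]
  refine ⟨⟨?_, hx, inv_mem hb⟩, ⟨?_, hconjm b hb, hconjp a ha, ?_⟩, ?_⟩
  · rw [hax, inv_inv, ← mul_assoc, ← mul_assoc, hθ2, one_mul]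
  · rw [eq_mul_inv_iff_mul_eq, hax]
    simp only [← mul_assoc]
    rw [mul_assoc (θ * x⁻¹), hθ2, mul_one, mul_assoc θ, inv_mul_cancel, mul_one]
  · simp [mul_inv_rev, hinv, mul_assoc]
  · intro e f he hf hef
    refine ⟨?_, mul_mem ha he, mul_mem hh hf⟩
    have he' : e = θ * (θ * b⁻¹ * θ * g) * f := by rw [hef]; group
    rw [he', hax, hyy]
    simp [mul_inv_rev, mul_assoc]
    rw [← mul_assoc θ θ, hθ2, one_mul, ← mul_assoc b b⁻¹, mul_inv_cancel, one_mul]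
end

section
/- Let G be a group with subgroups G₊ and G₋ such that G₊ ∩ G₋ = {1}, and let θ ∈ G satisfy θG₋θ⁻¹ = G₊ with θ² central in G. Let x ∈ G₊ and suppose θx = a·b⁻¹ and θa⁻¹ = c·d⁻¹ with a, c ∈ G₊ and b, d ∈ G₋. Then: (i) c⁻¹ = θbθ⁻¹, i.e. for ρ(u) := ((θu)₊)⁻¹ one has ρ(ρ(x)) = θ(θx)₋θ⁻¹; (ii) θ⁻¹x⁻¹ = (θbθ⁻¹)·(θ⁻¹aθ)⁻¹ with θbθ⁻¹ ∈ G₊ and θ⁻¹aθ ∈ G₋, so ρ(ρ(x)) = (θ⁻¹x⁻¹)₊ = ρ⁻¹(x); (iii) θc⁻¹ = x⁻¹·(θ⁻¹a⁻¹θ)⁻¹ with x⁻¹ ∈ G₊ and θ⁻¹a⁻¹θ ∈ G₋, hence ρ(ρ(ρ(x))) = x, i.e. ρ is of order three wherever defined. -/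
/-- let `G` be a group with subgroups `G₊, G₋` such that
`G₊ ∩ G₋ = {1}`, and `θ ∈ G` with `θG₋θ⁻¹ = G₊` and `θ²` central in `G`.
Let `x ∈ G₊` with factorizations `θx = a·b⁻¹` and `θa⁻¹ = c·d⁻¹`
(`a, c ∈ G₊`, `b, d ∈ G₋`). Then:
(i) `c⁻¹ = θbθ⁻¹`, i.e. for `ρ(u) := ((θu)₊)⁻¹` one has
`ρ(ρ(x)) = θ(θx)₋θ⁻¹`;
(ii) `θ⁻¹x⁻¹ = (θbθ⁻¹)·(θ⁻¹aθ)⁻¹` with `θbθ⁻¹ ∈ G₊` and `θ⁻¹aθ ∈ G₋`,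
so `ρ(ρ(x)) = (θ⁻¹x⁻¹)₊ = ρ⁻¹(x)`;
(iii) `θc⁻¹ = x⁻¹·(θ⁻¹a⁻¹θ)⁻¹` with `x⁻¹ ∈ G₊` and `θ⁻¹a⁻¹θ ∈ G₋`, hence
`ρ(ρ(ρ(x))) = x`, i.e. `ρ` is of order three wherever defined. -/
theorem stmt16 {G : Type*} [Group G] (Gp Gm : Subgroup G)
    (hmeet : Gp ⊓ Gm = ⊥) (θ : G)
    (hθ : Subgroup.map (MulAut.conj θ).toMonoidHom Gm = Gp)
    (hcen : θ * θ ∈ Subgroup.center G)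
    (x a b c d : G) (hx : x ∈ Gp)
    (ha : a ∈ Gp) (hb : b ∈ Gm) (hfx : θ * x = a * b⁻¹)
    (hc : c ∈ Gp) (hd : d ∈ Gm) (hfa : θ * a⁻¹ = c * d⁻¹) :
    (c⁻¹ = θ * b * θ⁻¹) ∧
    (θ⁻¹ * x⁻¹ = (θ * b * θ⁻¹) * (θ⁻¹ * a * θ)⁻¹ ∧
      θ * b * θ⁻¹ ∈ Gp ∧ θ⁻¹ * a * θ ∈ Gm) ∧
    (θ * c⁻¹ = x⁻¹ * (θ⁻¹ * a⁻¹ * θ)⁻¹ ∧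
      x⁻¹ ∈ Gp ∧ θ⁻¹ * a⁻¹ * θ ∈ Gm) := by
  have h2 : ∀ g : G, g * (θ * θ) = (θ * θ) * g := fun g =>
    Subgroup.mem_center_iff.mp hcen g
  have commθ : ∀ g : G, θ⁻¹ * g * θ = θ * g * θ⁻¹ := by
    intro g
    calc θ⁻¹ * g * θ = θ⁻¹ * (g * (θ * θ)) * θ⁻¹ := by group
      _ = θ⁻¹ * ((θ * θ) * g) * θ⁻¹ := by rw [h2]
      _ = θ * g * θ⁻¹ := by group
  have hp : ∀ g ∈ Gm, θ * g * θ⁻¹ ∈ Gp := by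
    intro g hg
    rw [← hθ]
    exact Subgroup.mem_map.mpr ⟨g, hg, rfl⟩
  have hm : ∀ g ∈ Gp, θ⁻¹ * g * θ ∈ Gm := by
    intro g hg
    rw [← hθ] at hg
    obtain ⟨y, hy, hyg⟩ := hg
    have : y = θ⁻¹ * g * θ := by
      have : θ * y * θ⁻¹ = g := hyg
      rw [← this]; group
    rwa [← this]
  have ha' : a = θ * x * b := by rw [hfx]; group
  have key : θ * a⁻¹ = (θ * b⁻¹ * θ⁻¹) * (θ⁻¹ * x⁻¹ * θ) := by
    rw [commθ x⁻¹, ha']; group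
  have h1 : c * d⁻¹ = (θ * b⁻¹ * θ⁻¹) * (θ⁻¹ * x⁻¹ * θ) := hfa.symm.trans key
  have hcform : c = (θ * b⁻¹ * θ⁻¹) * ((θ⁻¹ * x⁻¹ * θ) * d) := by
    have : c = c * d⁻¹ * d := by group
    rw [this, h1]; group
  have heq : (θ * b⁻¹ * θ⁻¹)⁻¹ * c = (θ⁻¹ * x * θ)⁻¹ * d := by
    rw [hcform]; group
  have hmemL : (θ * b⁻¹ * θ⁻¹)⁻¹ * c ∈ Gp :=
    mul_mem (inv_mem (hp b⁻¹ (inv_mem hb))) hc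
  have hmemR : (θ * b⁻¹ * θ⁻¹)⁻¹ * c ∈ Gm := by
    rw [heq]; exact mul_mem (inv_mem (hm x hx)) hd
  have hone : (θ * b⁻¹ * θ⁻¹)⁻¹ * c = 1 := by
    have : (θ * b⁻¹ * θ⁻¹)⁻¹ * c ∈ Gp ⊓ Gm := ⟨hmemL, hmemR⟩
    rwa [hmeet, Subgroup.mem_bot] at this
  have hcb : c = θ * b⁻¹ * θ⁻¹ := by
    have := mul_eq_one_iff_inv_eq.mp hone
    rw [← this]; group
  have hci : c⁻¹ = θ * b * θ⁻¹ := by rw [hcb]; group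
  refine ⟨hci, ⟨?_, hp b hb, hm a ha⟩, ⟨?_, inv_mem hx, hm a⁻¹ (inv_mem ha)⟩⟩
  · calc θ⁻¹ * x⁻¹ = (θ⁻¹ * x⁻¹ * θ) * θ⁻¹ := by group
      _ = (θ * x⁻¹ * θ⁻¹) * θ⁻¹ := by rw [commθ]
      _ = (θ * b * θ⁻¹) * (θ * a * θ⁻¹)⁻¹ := by rw [ha']; group
      _ = (θ * b * θ⁻¹) * (θ⁻¹ * a * θ)⁻¹ := by rw [commθ]
  · calc θ * c⁻¹ = θ * θ * b * θ⁻¹ := by rw [hci]; group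
      _ = b * (θ * θ) * θ⁻¹ := by rw [h2]
      _ = b * θ := by group
      _ = x⁻¹ * (θ⁻¹ * a⁻¹ * θ)⁻¹ := by rw [ha']; group
end
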